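/- arXiv:2508.20009 — 5 statements merged into one kernel-verified Lean document; each statement's English description precedes it below -/
import Mathlib

section
/- Let P ⊆ ℝ² be a lattice polygon and let u ∈ ℤ² be primitive. Suppose L is a u-lattice line that passes through an extreme point (vertex) of P and satisfies vol(L ∩ P) ≥ vol(L' ∩ P) for every u-lattice line L', where vol denotes the Euclidean length of the chord. Then L is a u-lattice diameter line of P, i.e., |L ∩ P ∩ ℤ²| ≥ |L' ∩ P ∩ ℤ²| for every u-lattice line L'. -/
/-- The coordinatewise embedding of `ℤ²` into the Euclidean plane. -/
def toE (z : Fin 2 → ℤ) : EuclideanSpace ℝ (Fin 2) := WithLp.toLp 2 (fun i => (z i : ℝ))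

/-- The set of lattice points of the Euclidean plane. -/
def latE : Set (EuclideanSpace ℝ (Fin 2)) := Set.range toE

/-- The `u`-lattice line through the lattice point `z` in direction `u`. -/
def uline (z u : Fin 2 → ℤ) : Set (EuclideanSpace ℝ (Fin 2)) :=
  {p | ∃ t : ℝ, p = toE z + t • toE u}

/-!
Parametrize the `u`-lattice line through `z` by `t ↦ z + t u`. The chord it cuts from the compact
convex polygon `P` is a parameter interval `[a, b]` of Euclidean length `(b - a)‖u‖`, and since `u`
is primitive its lattice points are those with `t ∈ ℤ`: there are `⌊b⌋ - ⌈a⌉ + 1 ≤ ⌊b - a⌋ + 1`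
of them. A vertex of `P` on `L` must be an endpoint of the chord of `L`, so one endpoint of its
parameter interval is an integer and the bound `⌊b - a⌋ + 1` is attained; as `L` has the longest
chord, no other `u`-lattice line can do better.
-/

open AffineMap Set

section Chord

variable {E : Type*} [NormedAddCommGroup E] [NormedSpace ℝ E] {K : Set E} {p q : E}

lemma IsCompact.lineMap_preimage (hK : IsCompact K) (hpq : p ≠ q) :
    IsCompact (lineMap p q ⁻¹' K : Set ℝ) :=
  Metric.isCompact_of_isClosed_isBounded (hK.isClosed.preimage lineMap_continuous)
    ((antilipschitzWith_lineMap hpq).isBounded_preimage hK.isBounded)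

lemma exists_lineMap_preimage_eq_Icc (hK : IsCompact K) (hKc : Convex ℝ K) (hpq : p ≠ q)
    (hne : (lineMap p q ⁻¹' K : Set ℝ).Nonempty) :
    ∃ a b : ℝ, a ≤ b ∧ lineMap p q ⁻¹' K = Icc a b := by
  have h := eq_Icc_of_connected_compact
    ⟨hne, (hKc.affine_preimage (lineMap p q)).isPreconnected⟩ (hK.lineMap_preimage hpq)
  exact ⟨_, _, nonempty_Icc.1 (h ▸ hne), h⟩

lemma diam_range_lineMap_inter {a b : ℝ} (hab : a ≤ b) (h : lineMap p q ⁻¹' K = Icc a b) :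
    Metric.diam (range (lineMap p q : ℝ →ᵃ[ℝ] E) ∩ K) = (b - a) * dist p q := by
  rw [← image_preimage_eq_range_inter, h, ← segment_eq_Icc hab, image_segment,
    ← convexHull_pair, convexHull_diam, Metric.diam_pair, dist_lineMap_lineMap,
    Real.dist_eq, abs_sub_comm, abs_of_nonneg (sub_nonneg.2 hab)]

lemma eq_or_eq_of_lineMap_mem_extremePoints {a b m : ℝ} (hpq : p ≠ q)
    (h : lineMap p q ⁻¹' K = Icc a b) (hm : lineMap p q m ∈ K.extremePoints ℝ) :
    m = a ∨ m = b := by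
  have hmab : m ∈ Icc a b := h ▸ hm.1
  by_contra! hne
  have hm' : m ∈ Ioo a b := ⟨lt_of_le_of_ne hmab.1 hne.1.symm, lt_of_le_of_ne hmab.2 hne.2⟩
  have hseg : lineMap p q m ∈ openSegment ℝ (lineMap p q a) (lineMap p q b : E) := by
    rw [← image_openSegment, openSegment_eq_Ioo (hm'.1.trans hm'.2)]
    exact mem_image_of_mem _ hm'
  have hmem : ∀ t ∈ Icc a b, lineMap p q t ∈ K := fun t ht => by rwa [← mem_preimage, h]
  have hab := hm'.1.le.trans hm'.2.le
  exact hne.1 (lineMap_injective ℝ hpq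
    (hm.2 (hmem a (left_mem_Icc.2 hab)) (hmem b (right_mem_Icc.2 hab)) hseg)).symm

end Chord

lemma exists_intCast_eq_of_forall_mul_intCast {R ι : Type*} [CommRing R] [Fintype ι]
    {u : ι → ℤ} (hu : Finset.univ.gcd u = 1) {t : R} (h : ∀ i, ∃ c : ℤ, t * u i = c) :
    ∃ n : ℤ, t = n := by
  choose c hc using h
  obtain ⟨g, hg⟩ := Finset.gcd_eq_sum_mul Finset.univ u
  rw [hu] at hg
  refine ⟨∑ i, c i * g i, ?_⟩
  have hg' : (1 : R) = ∑ i, (u i : R) * g i := by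
    simpa only [Int.cast_one, Int.cast_sum, Int.cast_mul] using congrArg (Int.cast : ℤ → R) hg
  push_cast
  rw [← mul_one t, hg', Finset.mul_sum]
  simp_rw [← mul_assoc, hc]

lemma ne_zero_of_univ_gcd_eq_one {ι : Type*} [Fintype ι] {u : ι → ℤ}
    (hu : Finset.univ.gcd u = 1) : u ≠ 0 := by
  rintro rfl
  exact zero_ne_one ((Finset.gcd_eq_zero_iff.2 fun _ _ => rfl).symm.trans hu)

lemma Int.card_Icc_ceil_floor_le {a b a' b' : ℝ} (hlen : b' - a' ≤ b - a)
    (hend : ∃ m : ℤ, (m : ℝ) = a ∨ (m : ℝ) = b) :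
    (Finset.Icc ⌈a'⌉ ⌊b'⌋).card ≤ (Finset.Icc ⌈a⌉ ⌊b⌋).card := by
  have h' : ⌊b'⌋ - ⌈a'⌉ ≤ ⌊b' - a'⌋ :=
    Int.le_floor.2 (by push_cast; linarith [Int.floor_le b', Int.le_ceil a'])
  have h : ⌊b - a⌋ = ⌊b⌋ - ⌈a⌉ := by
    obtain ⟨m, rfl | rfl⟩ := hend
    · rw [Int.floor_sub_intCast, Int.ceil_intCast]
    · rw [Int.floor_intCast, sub_eq_neg_add, Int.floor_add_intCast, Int.floor_neg]; ring
  rw [Int.card_Icc, Int.card_Icc]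
  exact Int.toNat_le_toNat (by linarith [Int.floor_le_floor hlen])

section Lattice

variable {z u : Fin 2 → ℤ}

lemma toE_injective : Function.Injective toE := fun a b h =>
  funext fun i => Int.cast_injective (congrArg (· i) h : (a i : ℝ) = b i)

lemma toE_add (a b : Fin 2 → ℤ) : toE (a + b) = toE a + toE b := by
  ext i; simp [toE]

lemma toE_zsmul (n : ℤ) (a : Fin 2 → ℤ) : toE (n • a) = (n : ℝ) • toE a := by
  ext i; simp [toE]

lemma toE_ne_toE_add (hu : Finset.univ.gcd u = 1) : toE z ≠ toE (z + u) :=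
  toE_injective.ne fun h => ne_zero_of_univ_gcd_eq_one hu (left_eq_add.1 h)

lemma dist_toE_toE_add (z u : Fin 2 → ℤ) : dist (toE z) (toE (z + u)) = ‖toE u‖ := by
  rw [toE_add, dist_self_add_right]

noncomputable def ulineMap (z u : Fin 2 → ℤ) : ℝ →ᵃ[ℝ] EuclideanSpace ℝ (Fin 2) :=
  lineMap (toE z) (toE (z + u))

lemma ulineMap_apply (z u : Fin 2 → ℤ) (t : ℝ) : ulineMap z u t = toE z + t • toE u := by
  rw [ulineMap, lineMap_apply_module', toE_add, add_sub_cancel_left, add_comm]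

lemma range_ulineMap (z u : Fin 2 → ℤ) : range (ulineMap z u) = uline z u := by
  ext p
  simp only [mem_range, uline, mem_ofPred_eq, ulineMap_apply, eq_comm]

lemma ulineMap_intCast (z u : Fin 2 → ℤ) (n : ℤ) : ulineMap z u n = toE (z + n • u) := by
  rw [ulineMap_apply, toE_add, toE_zsmul]

lemma mem_uline_inter_latE (hu : Finset.univ.gcd u = 1) {p : EuclideanSpace ℝ (Fin 2)} :
    p ∈ uline z u ∩ latE ↔ ∃ n : ℤ, ulineMap z u n = p := by
  constructor
  · rintro ⟨hp, y, rfl⟩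
    obtain ⟨t, ht⟩ := (range_ulineMap z u ▸ hp : toE y ∈ range (ulineMap z u))
    have hcoord : ∀ i, ∃ c : ℤ, t * u i = c := fun i => ⟨y i - z i, by
      have := congrArg (· i) ht
      simp only [ulineMap_apply, toE, PiLp.add_apply, PiLp.smul_apply, smul_eq_mul] at this
      push_cast
      linarith⟩
    obtain ⟨n, rfl⟩ := exists_intCast_eq_of_forall_mul_intCast hu hcoord
    exact ⟨n, ht⟩
  · rintro ⟨n, rfl⟩
    exact ⟨range_ulineMap z u ▸ mem_range_self _, _, (ulineMap_intCast z u n).symm⟩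

lemma ncard_uline_inter_inter_latE (hu : Finset.univ.gcd u = 1)
    {K : Set (EuclideanSpace ℝ (Fin 2))} {a b : ℝ} (h : ulineMap z u ⁻¹' K = Icc a b) :
    (uline z u ∩ K ∩ latE).ncard = (Finset.Icc ⌈a⌉ ⌊b⌋).card := by
  have hset : uline z u ∩ K ∩ latE = (fun n : ℤ => ulineMap z u n) '' (Int.cast ⁻¹' Icc a b) := by
    ext p
    rw [inter_right_comm, mem_inter_iff, mem_uline_inter_latE hu, ← h]
    constructor
    · rintro ⟨⟨n, rfl⟩, hp⟩
      exact ⟨n, hp, rfl⟩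
    · rintro ⟨n, hn, rfl⟩
      exact ⟨⟨n, rfl⟩, hn⟩
  have hinj : Function.Injective fun n : ℤ => ulineMap z u n :=
    (lineMap_injective ℝ (toE_ne_toE_add hu)).comp Int.cast_injective
  rw [hset, ncard_image_of_injective _ hinj, Int.preimage_Icc, ← Finset.coe_Icc, ncard_coe_finset]

lemma diam_uline_inter {K : Set (EuclideanSpace ℝ (Fin 2))} {a b : ℝ} (hab : a ≤ b)
    (h : ulineMap z u ⁻¹' K = Icc a b) : Metric.diam (uline z u ∩ K) = (b - a) * ‖toE u‖ := by
  rw [← range_ulineMap, ulineMap, diam_range_lineMap_inter hab h, dist_toE_toE_add]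

lemma norm_toE_pos (hu : Finset.univ.gcd u = 1) : 0 < ‖toE u‖ :=
  dist_toE_toE_add 0 u ▸ dist_pos.2 (toE_ne_toE_add hu)

end Lattice

theorem stmt1_general (V : Finset (Fin 2 → ℤ)) (P : Set (EuclideanSpace ℝ (Fin 2)))
    (hP : P = convexHull ℝ (toE '' (V : Set (Fin 2 → ℤ))))
    (u : Fin 2 → ℤ) (hu : Finset.univ.gcd u = 1)
    (z : Fin 2 → ℤ) (L : Set (EuclideanSpace ℝ (Fin 2))) (hL : L = uline z u)
    (hvert : ∃ v ∈ L, v ∈ Set.extremePoints ℝ P)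
    (hmax : ∀ z' : Fin 2 → ℤ, Metric.diam (uline z' u ∩ P) ≤ Metric.diam (L ∩ P)) :
    ∀ z' : Fin 2 → ℤ, (uline z' u ∩ P ∩ latE).ncard ≤ (L ∩ P ∩ latE).ncard := by
  subst hL
  have hPc : IsCompact P := hP ▸ (V.finite_toSet.image toE).isCompact_convexHull (𝕜 := ℝ)
  have hPconv : Convex ℝ P := hP ▸ convex_convexHull ℝ _
  obtain ⟨v, hvL, hvext⟩ := hvert
  have hvlat : v ∈ latE := by
    obtain ⟨y, -, rfl⟩ := extremePoints_convexHull_subset (hP ▸ hvext)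
    exact mem_range_self y
  obtain ⟨m, rfl⟩ := (mem_uline_inter_latE hu).1 ⟨hvL, hvlat⟩
  obtain ⟨a, b, hab, hchord⟩ :=
    exists_lineMap_preimage_eq_Icc hPc hPconv (toE_ne_toE_add hu) ⟨(m : ℝ), hvext.1⟩
  have hend : m = a ∨ m = b :=
    eq_or_eq_of_lineMap_mem_extremePoints (toE_ne_toE_add hu) hchord hvext
  intro z'
  rw [ncard_uline_inter_inter_latE hu hchord]
  rcases (ulineMap z' u ⁻¹' P).eq_empty_or_nonempty with hempty | hne
  · simp [← range_ulineMap, ← image_preimage_eq_range_inter, hempty]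
  obtain ⟨a', b', hab', hchord'⟩ :=
    exists_lineMap_preimage_eq_Icc hPc hPconv (toE_ne_toE_add hu) hne
  rw [ncard_uline_inter_inter_latE hu hchord']
  refine Int.card_Icc_ceil_floor_le ?_ ⟨m, hend⟩
  have hdiam := hmax z'
  rw [diam_uline_inter hab' hchord', diam_uline_inter hab hchord] at hdiam
  exact le_of_mul_le_mul_right hdiam (norm_toE_pos hu)

/-- If a `u`-lattice line `L` passes through an extreme point of a
lattice polygon `P` and its chord `L ∩ P` has maximal Euclidean length among all
`u`-lattice lines, then `L` contains the most lattice points of `P` among all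
`u`-lattice lines. -/
theorem stmt1 (V : Finset (Fin 2 → ℤ)) (P : Set (EuclideanSpace ℝ (Fin 2)))
    (hP : P = convexHull ℝ (toE '' (V : Set (Fin 2 → ℤ))))
    (hdim : affineSpan ℝ P = ⊤)
    (u : Fin 2 → ℤ) (hu : Finset.univ.gcd u = 1)
    (z : Fin 2 → ℤ) (L : Set (EuclideanSpace ℝ (Fin 2))) (hL : L = uline z u)
    (hvert : ∃ v ∈ L, v ∈ Set.extremePoints ℝ P)
    (hmax : ∀ z' : Fin 2 → ℤ, Metric.diam (uline z' u ∩ P) ≤ Metric.diam (L ∩ P)) :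
    ∀ z' : Fin 2 → ℤ, (uline z' u ∩ P ∩ latE).ncard ≤ (L ∩ P ∩ latE).ncard :=
  stmt1_general V P hP u hu z L hL hvert hmax
end

section
/- Let P ⊆ ℝ² be a lattice polygon and let u ∈ ℤ² be primitive. Suppose there exist two distinct u-lattice lines L₁ ≠ L₂ such that for i = 1, 2, vol(Lᵢ ∩ P) ≥ vol(L' ∩ P) for every u-lattice line L', where vol denotes Euclidean length of the chord. Then there exists a nonzero vector a ∈ ℝ² such that both faces F⁺ = {x ∈ P : ⟨a, x⟩ = max_{P} ⟨a, ·⟩} and F⁻ = {x ∈ P : ⟨a, x⟩ = min_{P} ⟨a, ·⟩} have affine dimension 1 (a pair of parallel edges e₁, e₂ of P), and every u-lattice line L with vol(L ∩ P) ≥ vol(L' ∩ P) for all u-lattice lines L' satisfies L ∩ P ⊆ conv(F⁺ ∪ F⁻). -/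
/-- The exposed face of `P` maximizing `⟨a, ·⟩`. -/
def maxFace (P : Set (EuclideanSpace ℝ (Fin 2))) (a : EuclideanSpace ℝ (Fin 2)) :
    Set (EuclideanSpace ℝ (Fin 2)) :=
  {x ∈ P | ∀ y ∈ P, (inner ℝ a y : ℝ) ≤ inner ℝ a x}

/-- The exposed face of `P` minimizing `⟨a, ·⟩`. -/
def minFace (P : Set (EuclideanSpace ℝ (Fin 2))) (a : EuclideanSpace ℝ (Fin 2)) :
    Set (EuclideanSpace ℝ (Fin 2)) :=
  {x ∈ P | ∀ y ∈ P, (inner ℝ a x : ℝ) ≤ inner ℝ a y}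

open Module Set

local notation "ℝ²" => EuclideanSpace ℝ (Fin 2)

theorem IsCompact.exists_dist_eq_diam {α : Type*} [PseudoMetricSpace α] {s : Set α}
    (hs : IsCompact s) (hne : s.Nonempty) : ∃ p ∈ s, ∃ q ∈ s, dist p q = Metric.diam s := by
  obtain ⟨⟨p, q⟩, ⟨hp, hq⟩, hmax⟩ :=
    (hs.prod hs).exists_isMaxOn (hne.prod hne) continuous_dist.continuousOn
  refine ⟨p, hp, q, hq, le_antisymm (Metric.dist_le_diam_of_mem hs.isBounded hp hq) ?_⟩
  exact Metric.diam_le_of_forall_dist_le dist_nonneg fun x hx y hy => hmax (mk_mem_prod hx hy)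

theorem exists_notMem_line_of_affineSpan_eq_top {k E : Type*} [Field k] [AddCommGroup E]
    [Module k E] {S : Set E} (hS : affineSpan k S = ⊤) (hE : 1 < finrank k E) (p q : E) :
    ∃ r ∈ S, r ∉ line[k, p, q] := by
  by_contra! h
  have htop : line[k, p, q] = ⊤ := top_unique (hS ▸ affineSpan_le.2 h)
  have hdir : k ∙ (p -ᵥ q) = ⊤ := by
    rw [← vectorSpan_pair, ← direction_affineSpan, htop, AffineSubspace.direction_top]
  have := finrank_span_le_card (R := k) {p -ᵥ q}
  rw [hdir, finrank_top] at this
  simp only [Set.toFinset_singleton, Finset.card_singleton] at this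
  omega

theorem exists_mem_segment_apply_eq {E F : Type*} [AddCommGroup E] [Module ℝ E] [AddCommGroup F]
    [Module ℝ F] (f : E →ₗ[ℝ] F) {a b : E} {r : F} (hr : r ∈ segment ℝ (f a) (f b)) :
    ∃ z ∈ segment ℝ a b, f z = r := by
  rwa [← f.coe_toAffineMap, ← image_segment] at hr

theorem le_apply_of_mem_segment_of_ne {E : Type*} [AddCommGroup E] [Module ℝ E] (g : E →ₗ[ℝ] ℝ)
    {x y z : E} (hz : z ∈ segment ℝ y x) (hzx : z ≠ x) (hgz : g x ≤ g z) : g x ≤ g y := by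
  obtain ⟨α, β, hα, hβ, hαβ, rfl⟩ := hz
  have hα : 0 < α := hα.lt_of_ne' fun h => hzx (by simp [h, show β = 1 by linarith])
  obtain rfl : β = 1 - α := by linarith
  simp only [map_add, map_smul, smul_eq_mul] at hgz
  nlinarith

theorem exists_ne_mem_convexHull_apply_eq {E : Type*} [AddCommGroup E] [Module ℝ E]
    {S : Set E} (hS : S.Finite) (hspan : affineSpan ℝ S = ⊤) (hE : 1 < finrank ℝ E)
    (f : E →ₗ[ℝ] ℝ) : ∃ r ∈ S, ∃ z ∈ convexHull ℝ S, z ≠ r ∧ f z = f r := by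
  have hne := AffineSubspace.nonempty_of_affineSpan_eq_top ℝ E E hspan
  obtain ⟨p, hp, hpmin⟩ := S.exists_min_image f hS hne
  obtain ⟨q, hq, hqmax⟩ := S.exists_max_image f hS hne
  obtain ⟨r, hr, hrpq⟩ := exists_notMem_line_of_affineSpan_eq_top hspan hE p q
  obtain ⟨z, hz, hfz⟩ := exists_mem_segment_apply_eq f (r := f r)
    (by rw [segment_eq_Icc (hpmin q hq)]; exact ⟨hpmin r hr, hqmax r hr⟩)
  refine ⟨r, hr, z, segment_subset_convexHull hp hq hz, ?_, hfz⟩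
  rintro rfl
  exact hrpq (mem_segment_iff_wbtw.1 hz).mem_affineSpan

section LatticeChords

variable {E : Type*} [NormedAddCommGroup E] [NormedSpace ℝ E]

def LatticeChordsLE (P : Set E) (f : E →ₗ[ℝ] ℝ) (D : ℝ) : Prop :=
  ∀ m : ℤ, ∀ p ∈ P, ∀ q ∈ P, f p = m → f q = m → dist p q ≤ D

variable {P : Set E} {f : E →ₗ[ℝ] ℝ} {w : E}

theorem exists_eq_add_smul_of_ker_eq (hker : LinearMap.ker f = ℝ ∙ w) {p q : E}
    (h : f p = f q) : ∃ t : ℝ, p = q + t • w := by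
  have : p - q ∈ ℝ ∙ w := by rw [← hker, LinearMap.mem_ker, map_sub, h, sub_self]
  obtain ⟨t, ht⟩ := Submodule.mem_span_singleton.1 this
  exact ⟨t, by rw [ht, add_sub_cancel]⟩

theorem apply_eq_zero_of_ker_eq (hker : LinearMap.ker f = ℝ ∙ w) : f w = 0 := by
  rw [← LinearMap.mem_ker, hker]; exact Submodule.mem_span_singleton_self w

theorem IsCompact.exists_add_smul_mem {C : Set E} (hC : IsCompact C) (hne : C.Nonempty)
    {v : E} (hv : v ≠ 0) (hline : ∀ p ∈ C, ∀ q ∈ C, ∃ t : ℝ, p = q + t • v) :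
    ∃ x ∈ C, x + (Metric.diam C * ‖v‖⁻¹) • v ∈ C := by
  have hv' : 0 < ‖v‖ := norm_pos_iff.2 hv
  obtain ⟨p, hp, q, hq, hpq⟩ := hC.exists_dist_eq_diam hne
  obtain ⟨t, rfl⟩ := hline p hp q hq
  rw [dist_eq_norm, add_sub_cancel_left, norm_smul, Real.norm_eq_abs] at hpq
  rcases le_total 0 t with ht | ht
  · refine ⟨q, hq, ?_⟩
    rwa [← hpq, abs_of_nonneg ht, mul_inv_cancel_right₀ hv'.ne']
  · refine ⟨q + t • v, hp, ?_⟩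
    rwa [← hpq, abs_of_nonpos ht, mul_inv_cancel_right₀ hv'.ne', add_assoc, ← add_smul,
      add_neg_cancel, zero_smul, add_zero]

theorem LatticeChordsLE.pos {S : Set E} {D : ℝ} (hchords : LatticeChordsLE (convexHull ℝ S) f D)
    (hS : S.Finite) (hSf : ∀ x ∈ S, ∃ m : ℤ, f x = m) (hspan : affineSpan ℝ S = ⊤)
    (hE : 1 < finrank ℝ E) : 0 < D := by
  obtain ⟨r, hr, z, hz, hzr, hfz⟩ := exists_ne_mem_convexHull_apply_eq hS hspan hE f
  obtain ⟨m, hm⟩ := hSf r hr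
  exact (dist_pos.2 hzr).trans_le
    (hchords m z hz r (subset_convexHull ℝ S hr) (hfz.trans hm) hm)

section MaximalChords

variable (hker : LinearMap.ker f = ℝ ∙ w) (hw : w ≠ 0) (hchords : LatticeChordsLE P f ‖w‖)
include hker hw hchords

theorem LatticeChordsLE.mem_segment {m : ℤ} {x y : E} (hx : x ∈ P) (hxw : x + w ∈ P)
    (hfx : f x = m) (hy : y ∈ P) (hfy : f y = m) : y ∈ segment ℝ x (x + w) := by
  have hw' : 0 < ‖w‖ := norm_pos_iff.2 hw
  obtain ⟨t, rfl⟩ := exists_eq_add_smul_of_ker_eq hker (hfy.trans hfx.symm)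
  have h₁ := hchords m _ hy x hx hfy hfx
  have hfw := apply_eq_zero_of_ker_eq hker
  have h₂ := hchords m _ hy _ hxw hfy (by rw [map_add, hfw, add_zero, hfx])
  have hsub : x + t • w - (x + w) = (t - 1) • w := by module
  rw [dist_eq_norm, add_sub_cancel_left, norm_smul, Real.norm_eq_abs] at h₁
  rw [dist_eq_norm, hsub, norm_smul, Real.norm_eq_abs] at h₂
  have ht₁ : |t| ≤ 1 := le_of_mul_le_mul_right (by linarith) hw'
  have ht₂ : |t - 1| ≤ 1 := le_of_mul_le_mul_right (by linarith) hw'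
  exact (convex_segment x (x + w)).add_smul_mem (left_mem_segment ℝ _ _)
    (right_mem_segment ℝ _ _) ⟨by linarith [abs_le.1 ht₂], (abs_le.1 ht₁).2⟩

theorem LatticeChordsLE.apply_le {g : E →ₗ[ℝ] ℝ} (hg : 0 ≤ g w) {m : ℤ} {x y : E} (hx : x ∈ P)
    (hxw : x + w ∈ P) (hfx : f x = m) (hy : y ∈ P) (hfy : f y = m) : g x ≤ g y := by
  have hseg : segment ℝ x (x + w) ⊆ {z | g x ≤ g z} :=
    (convex_halfSpace_ge g.isLinear (g x)).segment_subset (mem_ofPred.2 le_rfl)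
      (by simpa using hg)
  exact hseg (hchords.mem_segment hker hw hx hxw hfx hy hfy)

theorem LatticeChordsLE.apply_le_of_two_chords (hP : Convex ℝ P) {g : E →ₗ[ℝ] ℝ}
    (hg : 0 ≤ g w) {x₁ x₂ y : E} {n₁ n₂ m : ℤ} (hx₁ : x₁ ∈ P) (hx₁w : x₁ + w ∈ P)
    (hx₂ : x₂ ∈ P) (hx₂w : x₂ + w ∈ P) (hf₁ : f x₁ = n₁) (hf₂ : f x₂ = n₂) (hn : n₁ ≠ n₂)
    (hg₁₂ : g x₁ = g x₂) (hy : y ∈ P) (hfy : f y = m) : g x₁ ≤ g y := by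
  wlog hlt : n₁ < n₂ generalizing x₁ x₂ n₁ n₂
  · exact hg₁₂ ▸ this hx₂ hx₂w hx₁ hx₁w hf₂ hf₁ hn.symm hg₁₂.symm (hn.symm.lt_of_le (not_lt.1 hlt))
  have hlt' : (n₁ : ℝ) < n₂ := Int.cast_lt.2 hlt
  rcases lt_or_ge m n₁ with hm | hm
  · have hm : (m : ℝ) < n₁ := Int.cast_lt.2 hm
    obtain ⟨z, hz, hfz⟩ := exists_mem_segment_apply_eq f (a := y) (b := x₂) (r := n₁)
      (by rw [hfy, hf₂, segment_eq_Icc (hm.trans hlt').le]; exact ⟨hm.le, hlt'.le⟩)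
    refine hg₁₂ ▸ le_apply_of_mem_segment_of_ne g hz ?_ ?_
    · rintro rfl; exact hn (Int.cast_injective (hfz.symm.trans hf₂))
    · exact hg₁₂ ▸ hchords.apply_le hker hw hg hx₁ hx₁w hf₁ (hP.segment_subset hy hx₂ hz) hfz
  rcases le_or_gt m n₂ with hm' | hm'
  · obtain ⟨z, hz, hfz⟩ := exists_mem_segment_apply_eq f (a := x₁) (b := x₂) (r := m)
      (by rw [hf₁, hf₂, segment_eq_Icc hlt'.le]; exact ⟨Int.cast_le.2 hm, Int.cast_le.2 hm'⟩)
    obtain ⟨α, β, hα, hβ, hαβ, rfl⟩ := hz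
    have hgz : g (α • x₁ + β • x₂) = g x₁ := by
      rw [map_add, map_smul, map_smul, ← hg₁₂, ← add_smul, hαβ, one_smul]
    have hzw : α • x₁ + β • x₂ + w ∈ P := by
      convert hP hx₁w hx₂w hα hβ hαβ using 1
      linear_combination (norm := module) -hαβ • w
    exact hgz ▸ hchords.apply_le hker hw hg (hP hx₁ hx₂ hα hβ hαβ) hzw hfz hy hfy
  · have hm' : (n₂ : ℝ) < m := Int.cast_lt.2 hm'
    obtain ⟨z, hz, hfz⟩ := exists_mem_segment_apply_eq f (a := y) (b := x₁) (r := n₂)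
      (by rw [hfy, hf₁, segment_symm, segment_eq_Icc (hlt'.trans hm').le]; exact ⟨hlt'.le, hm'.le⟩)
    refine le_apply_of_mem_segment_of_ne g hz ?_ ?_
    · rintro rfl; exact hn (Int.cast_injective (hf₁.symm.trans hfz))
    · exact hg₁₂ ▸ hchords.apply_le hker hw hg hx₂ hx₂w hf₂ (hP.segment_subset hy hx₁ hz) hfz

end MaximalChords

theorem LatticeChordsLE.mem_slab {S : Set E} (hchords : LatticeChordsLE (convexHull ℝ S) f ‖w‖)
    (hker : LinearMap.ker f = ℝ ∙ w) (hw : w ≠ 0) (hSf : ∀ x ∈ S, ∃ m : ℤ, f x = m)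
    {g : E →ₗ[ℝ] ℝ} (hg : 0 ≤ g w) {x₁ x₂ : E} {n₁ n₂ : ℤ} (hx₁ : x₁ ∈ convexHull ℝ S)
    (hx₁w : x₁ + w ∈ convexHull ℝ S) (hx₂ : x₂ ∈ convexHull ℝ S) (hx₂w : x₂ + w ∈ convexHull ℝ S)
    (hf₁ : f x₁ = n₁) (hf₂ : f x₂ = n₂) (hn : n₁ ≠ n₂) (hg₁₂ : g x₁ = g x₂) {y : E}
    (hy : y ∈ convexHull ℝ S) : g x₁ ≤ g y ∧ g y ≤ g (x₁ + w) := by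
  have hP := convex_convexHull ℝ S
  have hfw := apply_eq_zero_of_ker_eq hker
  constructor
  · refine convexHull_min (fun y hy => ?_) (convex_halfSpace_ge g.isLinear (g x₁)) hy
    obtain ⟨m, hm⟩ := hSf y hy
    exact hchords.apply_le_of_two_chords hker hw hP hg hx₁ hx₁w hx₂ hx₂w hf₁ hf₂ hn hg₁₂
      (subset_convexHull ℝ S hy) hm
  · -- the lower bound for the chords `[x + w, x]`, i.e. for `-w`, and the functional `-g`
    refine convexHull_min (fun y hy => ?_) (convex_halfSpace_le g.isLinear (g (x₁ + w))) hy
    obtain ⟨m, hm⟩ := hSf y hy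
    have hker' : LinearMap.ker f = ℝ ∙ (-w) := by
      rw [hker, ← Submodule.span_neg, Set.neg_singleton]
    have h := LatticeChordsLE.apply_le_of_two_chords hker' (neg_ne_zero.2 hw)
      (by rwa [norm_neg]) hP (g := -g) (x₁ := x₁ + w) (x₂ := x₂ + w) (by simpa using hg)
      hx₁w (by simpa using hx₁) hx₂w (by simpa using hx₂) (by simp [hfw, hf₁])
      (by simp [hfw, hf₂]) hn
      (by simp [hg₁₂]) (subset_convexHull ℝ S hy) hm
    simpa using h

end LatticeChords

theorem exists_inner_eq_zero_and_inner_pos {F : Type*} [NormedAddCommGroup F]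
    [InnerProductSpace ℝ F] {d v : F} (hv : v ∉ ℝ ∙ d) :
    ∃ a : F, inner ℝ a d = 0 ∧ 0 < inner ℝ a v := by
  set a := v - (ℝ ∙ d).starProjection v
  have had : inner ℝ a d = 0 :=
    Submodule.starProjection_inner_eq_zero v d (Submodule.mem_span_singleton_self d)
  have hmem := (ℝ ∙ d).starProjection_apply_mem v
  have ha : a ≠ 0 := fun h => hv (sub_eq_zero.1 h ▸ hmem)
  refine ⟨a, had, ?_⟩
  have hsplit : v = a + (ℝ ∙ d).starProjection v := by simp [a]
  rw [hsplit, inner_add_right, Submodule.starProjection_inner_eq_zero v _ hmem, add_zero,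
    real_inner_self_eq_norm_sq]
  positivity

theorem finrank_vectorSpan_eq_one {F : Type*} [NormedAddCommGroup F] [InnerProductSpace ℝ F]
    (hF : finrank ℝ F = 2) {a : F} (ha : a ≠ 0) {s : Set F} {c : ℝ}
    (hs : ∀ x ∈ s, inner ℝ a x = c) {x y : F} (hx : x ∈ s) (hy : y ∈ s) (hxy : x ≠ y) :
    finrank ℝ (vectorSpan ℝ s) = 1 := by
  have : Fact (finrank ℝ F = 1 + 1) := ⟨hF⟩
  have : FiniteDimensional ℝ F := Module.finite_of_finrank_eq_succ hF
  have hle : vectorSpan ℝ s ≤ (ℝ ∙ a)ᗮ := by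
    rw [vectorSpan_def, Submodule.span_le]
    rintro _ ⟨p, hp, q, hq, rfl⟩
    dsimp only
    rw [SetLike.mem_coe, Submodule.mem_orthogonal_singleton_iff_inner_right, vsub_eq_sub,
      inner_sub_right, hs p hp, hs q hq, sub_self]
  have hpos : vectorSpan ℝ s ≠ ⊥ := fun h => hxy (by
    simpa [h, sub_eq_zero] using vsub_mem_vectorSpan ℝ hx hy)
  have hle' := Submodule.finrank_mono hle
  rw [Submodule.finrank_orthogonal_span_singleton (n := 1) ha] at hle'
  have := Submodule.finrank_eq_zero.not.2 hpos
  omega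

section Faces

variable {P : Set ℝ²} {a x₀ x : ℝ²}

theorem mem_minFace_iff (hx₀ : x₀ ∈ P) (hP : ∀ y ∈ P, inner ℝ a x₀ ≤ inner ℝ a y) :
    x ∈ minFace P a ↔ x ∈ P ∧ inner ℝ a x = inner ℝ a x₀ :=
  ⟨fun ⟨hx, hmin⟩ => ⟨hx, le_antisymm (hmin x₀ hx₀) (hP x hx)⟩,
    fun ⟨hx, h⟩ => ⟨hx, fun y hy => h ▸ hP y hy⟩⟩

theorem mem_maxFace_iff (hx₀ : x₀ ∈ P) (hP : ∀ y ∈ P, inner ℝ a y ≤ inner ℝ a x₀) :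
    x ∈ maxFace P a ↔ x ∈ P ∧ inner ℝ a x = inner ℝ a x₀ :=
  ⟨fun ⟨hx, hmax⟩ => ⟨hx, le_antisymm (hP x hx) (hmax x₀ hx₀)⟩,
    fun ⟨hx, h⟩ => ⟨hx, fun y hy => h ▸ hP y hy⟩⟩

theorem parallel_edges_of_mem_slab (ha : a ≠ 0) {w x₁ x₂ : ℝ²} (hx₁ : x₁ ∈ P)
    (hx₁w : x₁ + w ∈ P) (hx₂ : x₂ ∈ P) (hx₂w : x₂ + w ∈ P) (hx₁₂ : x₁ ≠ x₂)
    (ha₁₂ : inner ℝ a x₁ = inner ℝ a x₂)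
    (hslab : ∀ y ∈ P, inner ℝ a x₁ ≤ inner ℝ a y ∧ inner ℝ a y ≤ inner ℝ a (x₁ + w)) :
    finrank ℝ (vectorSpan ℝ (maxFace P a)) = 1 ∧ finrank ℝ (vectorSpan ℝ (minFace P a)) = 1 ∧
      ∀ x ∈ P, x + w ∈ P → segment ℝ x (x + w) ⊆ convexHull ℝ (maxFace P a ∪ minFace P a) := by
  have hmin := fun x => mem_minFace_iff (x := x) hx₁ fun y hy => (hslab y hy).1
  have hmax := fun x => mem_maxFace_iff (x := x) hx₁w fun y hy => (hslab y hy).2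
  have ha₁₂' : inner ℝ a (x₂ + w) = inner ℝ a (x₁ + w) := by
    rw [inner_add_right, inner_add_right, ha₁₂]
  refine ⟨finrank_vectorSpan_eq_one finrank_euclideanSpace_fin ha (fun x hx => ((hmax x).1 hx).2)
      ((hmax _).2 ⟨hx₁w, rfl⟩) ((hmax _).2 ⟨hx₂w, ha₁₂'⟩) (by simpa using hx₁₂),
    finrank_vectorSpan_eq_one finrank_euclideanSpace_fin ha (fun x hx => ((hmin x).1 hx).2)
      ((hmin _).2 ⟨hx₁, rfl⟩) ((hmin _).2 ⟨hx₂, ha₁₂.symm⟩) hx₁₂, fun x hx hxw => ?_⟩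
  have hax : inner ℝ a x = inner ℝ a x₁ := by
    have := (hslab _ hxw).2
    rw [inner_add_right, inner_add_right] at this
    exact le_antisymm (by linarith [(hslab _ hx₁w).1]) (hslab x hx).1
  exact (convex_convexHull ℝ _).segment_subset
    (subset_convexHull ℝ _ (Or.inr ((hmin x).2 ⟨hx, hax⟩)))
    (subset_convexHull ℝ _ (Or.inl ((hmax _).2 ⟨hxw, by
      rw [inner_add_right, inner_add_right, hax]⟩)))

theorem exists_parallel_edges_of_latticeChordsLE {S : Set ℝ²} {f : ℝ² →ₗ[ℝ] ℝ} {w : ℝ²}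
    (hchords : LatticeChordsLE (convexHull ℝ S) f ‖w‖) (hker : LinearMap.ker f = ℝ ∙ w)
    (hw : w ≠ 0) (hSf : ∀ x ∈ S, ∃ m : ℤ, f x = m) {x₁ x₂ : ℝ²} {n₁ n₂ : ℤ}
    (hx₁ : x₁ ∈ convexHull ℝ S) (hx₁w : x₁ + w ∈ convexHull ℝ S) (hx₂ : x₂ ∈ convexHull ℝ S)
    (hx₂w : x₂ + w ∈ convexHull ℝ S) (hf₁ : f x₁ = n₁) (hf₂ : f x₂ = n₂) (hn : n₁ ≠ n₂) :
    ∃ a : ℝ², a ≠ 0 ∧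
      finrank ℝ (vectorSpan ℝ (maxFace (convexHull ℝ S) a)) = 1 ∧
      finrank ℝ (vectorSpan ℝ (minFace (convexHull ℝ S) a)) = 1 ∧
      ∀ m : ℤ, ∀ x ∈ convexHull ℝ S, x + w ∈ convexHull ℝ S → f x = m →
        {y ∈ convexHull ℝ S | f y = m} ⊆
          convexHull ℝ (maxFace (convexHull ℝ S) a ∪ minFace (convexHull ℝ S) a) := by
  have hn' : (n₂ - n₁ : ℝ) ≠ 0 := sub_ne_zero.2 (Int.cast_injective.ne hn.symm)
  have hfw := apply_eq_zero_of_ker_eq hker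
  have hwd : w ∉ ℝ ∙ (x₂ - x₁) := fun h => by
    obtain ⟨t, rfl⟩ := Submodule.mem_span_singleton.1 h
    rw [map_smul, map_sub, hf₁, hf₂, smul_eq_mul, mul_eq_zero] at hfw
    exact hw (by simp [hfw.resolve_right hn'])
  obtain ⟨a, had, haw⟩ := exists_inner_eq_zero_and_inner_pos hwd
  have ha₁₂ : inner ℝ a x₁ = inner ℝ a x₂ := by
    rw [inner_sub_right, sub_eq_zero] at had; exact had.symm
  have hx₁₂ : x₁ ≠ x₂ := by rintro rfl; exact hn' (by rw [← hf₁, ← hf₂, sub_self])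
  have ha : a ≠ 0 := fun h => by simp [h] at haw
  obtain ⟨hmax, hmin, hseg⟩ := parallel_edges_of_mem_slab ha hx₁ hx₁w hx₂ hx₂w hx₁₂ ha₁₂
    fun y hy => hchords.mem_slab hker hw hSf (g := innerₛₗ ℝ a) haw.le hx₁ hx₁w hx₂ hx₂w hf₁ hf₂
      hn ha₁₂ hy
  refine ⟨a, ha, hmax, hmin, fun m x hx hxw hfx y ⟨hy, hfy⟩ => ?_⟩
  exact hseg x hx hxw (hchords.mem_segment hker hw hx hxw hfx hy hfy)

end Faces

section LatticeLines

variable {u : Fin 2 → ℤ}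

def uheight (u : Fin 2 → ℤ) : ℝ² →ₗ[ℝ] ℝ where
  toFun x := u 0 * x 1 - u 1 * x 0
  map_add' x y := by simp only [PiLp.add_apply]; ring
  map_smul' r x := by simp only [PiLp.smul_apply, smul_eq_mul, RingHom.id_apply]; ring

theorem uheight_toE (u z : Fin 2 → ℤ) :
    uheight u (toE z) = ((u 0 * z 1 - u 1 * z 0 : ℤ) : ℝ) := by
  simp [uheight, toE]

theorem uheight_toE_self (u : Fin 2 → ℤ) : uheight u (toE u) = 0 := by
  simp [uheight, toE, mul_comm]

theorem toE_ne_zero (hu : u ≠ 0) : toE u ≠ 0 := fun h =>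
  hu (funext fun i => by simpa [toE] using congrArg (· i) h)

theorem ker_uheight (hu : u ≠ 0) : LinearMap.ker (uheight u) = ℝ ∙ toE u := by
  refine le_antisymm (fun x hx => ?_) ((Submodule.span_singleton_le_iff_mem _ _).2 ?_)
  · rw [LinearMap.mem_ker] at hx
    change (u 0 : ℝ) * x 1 - u 1 * x 0 = 0 at hx
    rw [Submodule.mem_span_singleton]
    have hu' : (u 0 : ℝ) ≠ 0 ∨ (u 1 : ℝ) ≠ 0 := by
      by_contra! h
      exact hu (funext fun i => by fin_cases i; exacts [mod_cast h.1, mod_cast h.2])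
    rcases hu' with h0 | h1
    · refine ⟨x 0 / u 0, ?_⟩
      ext i; fin_cases i <;> simp only [toE, Fin.zero_eta, Fin.mk_one, PiLp.smul_apply, smul_eq_mul]
      · exact div_mul_cancel₀ _ h0
      · field_simp; linarith
    · refine ⟨x 1 / u 1, ?_⟩
      ext i; fin_cases i <;> simp only [toE, Fin.zero_eta, Fin.mk_one, PiLp.smul_apply, smul_eq_mul]
      · field_simp; linarith
      · exact div_mul_cancel₀ _ h1
  · exact uheight_toE_self u

theorem uheight_eq_of_mem_uline {z : Fin 2 → ℤ} {x : ℝ²} (hx : x ∈ uline z u) :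
    uheight u x = ((u 0 * z 1 - u 1 * z 0 : ℤ) : ℝ) := by
  obtain ⟨t, rfl⟩ := hx
  rw [map_add, map_smul, uheight_toE_self, smul_zero, add_zero, uheight_toE]

theorem uline_eq (hu : u ≠ 0) (z : Fin 2 → ℤ) :
    uline z u = {x | uheight u x = ((u 0 * z 1 - u 1 * z 0 : ℤ) : ℝ)} := by
  ext x
  refine ⟨uheight_eq_of_mem_uline, fun hx => ?_⟩
  rw [mem_ofPred_eq, ← uheight_toE] at hx
  exact exists_eq_add_smul_of_ker_eq (ker_uheight hu) hx

theorem isClosed_uline (hu : u ≠ 0) (z : Fin 2 → ℤ) : IsClosed (uline z u) := by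
  rw [uline_eq hu]
  exact isClosed_eq (uheight u).continuous_of_finiteDimensional continuous_const

theorem IsCoprime.exists_mul_sub_mul_eq (hu : IsCoprime (u 0) (u 1)) (m : ℤ) :
    ∃ z : Fin 2 → ℤ, u 0 * z 1 - u 1 * z 0 = m := by
  obtain ⟨c, d, hcd⟩ := hu
  exact ⟨![-(m * d), m * c], by simp only [Matrix.cons_val]; linear_combination m * hcd⟩

theorem ne_zero_of_isCoprime (hu : IsCoprime (u 0) (u 1)) : u ≠ 0 := by
  rintro rfl; exact not_isCoprime_zero_zero hu

theorem isCoprime_of_gcd_eq_one (hu : Finset.univ.gcd u = 1) : IsCoprime (u 0) (u 1) := by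
  have h : gcd (u 0) (u 1) ∣ Finset.univ.gcd u := Finset.dvd_gcd fun i _ => by
    fin_cases i
    exacts [gcd_dvd_left _ _, gcd_dvd_right _ _]
  exact (gcd_isUnit_iff _ _).1 (isUnit_of_dvd_one (hu ▸ h))

theorem latticeChordsLE_uheight (hu : IsCoprime (u 0) (u 1)) {P : Set ℝ²} {D : ℝ}
    (hP : Bornology.IsBounded P) (hD : ∀ z, Metric.diam (uline z u ∩ P) ≤ D) :
    LatticeChordsLE P (uheight u) D := by
  intro m p hp q hq hpm hqm
  obtain ⟨z, hz⟩ := hu.exists_mul_sub_mul_eq m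
  have hu0 := ne_zero_of_isCoprime hu
  have hmem : ∀ x ∈ P, uheight u x = m → x ∈ uline z u ∩ P := fun x hx hxm =>
    ⟨by rw [uline_eq hu0, mem_ofPred_eq, hz, hxm], hx⟩
  exact (Metric.dist_le_diam_of_mem (hP.subset inter_subset_right) (hmem p hp hpm)
    (hmem q hq hqm)).trans (hD z)

theorem exists_mem_add_smul_mem_of_diam_eq (hu : u ≠ 0) {P : Set ℝ²} (hP : IsCompact P)
    {z : Fin 2 → ℤ} {D : ℝ} (hD : 0 < D) (hz : Metric.diam (uline z u ∩ P) = D) :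
    ∃ x ∈ P, x + (D * ‖toE u‖⁻¹) • toE u ∈ P ∧ uheight u x = ((u 0 * z 1 - u 1 * z 0 : ℤ) : ℝ) := by
  obtain ⟨x, ⟨hxl, hx⟩, -, hxw⟩ := (hP.inter_left (isClosed_uline hu z)).exists_add_smul_mem
    (nonempty_iff_ne_empty.2 fun h => by simp [h] at hz; linarith) (toE_ne_zero hu) (by
      rintro _ ⟨⟨s, rfl⟩, -⟩ _ ⟨⟨t, rfl⟩, -⟩
      exact ⟨s - t, by module⟩)
  exact ⟨x, hx, hz ▸ hxw, uheight_eq_of_mem_uline hxl⟩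

end LatticeLines

/-- If two distinct `u`-lattice lines both maximize the Euclidean
chord length with a lattice polygon `P` among `u`-lattice lines, then `P` has a pair
of parallel edges `F⁺, F⁻` (argmax and argmin faces of a common linear functional,
each of affine dimension 1) such that every chord-length-maximizing `u`-lattice line
meets `P` inside `conv(F⁺ ∪ F⁻)`. -/
theorem stmt6 (V : Finset (Fin 2 → ℤ)) (P : Set (EuclideanSpace ℝ (Fin 2)))
    (hP : P = convexHull ℝ (toE '' (V : Set (Fin 2 → ℤ))))
    (hdim : affineSpan ℝ P = ⊤)
    (u : Fin 2 → ℤ) (hu : Finset.univ.gcd u = 1)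
    (z₁ z₂ : Fin 2 → ℤ) (hne : uline z₁ u ≠ uline z₂ u)
    (hm₁ : ∀ z' : Fin 2 → ℤ, Metric.diam (uline z' u ∩ P) ≤ Metric.diam (uline z₁ u ∩ P))
    (hm₂ : ∀ z' : Fin 2 → ℤ, Metric.diam (uline z' u ∩ P) ≤ Metric.diam (uline z₂ u ∩ P)) :
    ∃ a : EuclideanSpace ℝ (Fin 2), a ≠ 0 ∧
      Module.finrank ℝ ↥(vectorSpan ℝ (maxFace P a)) = 1 ∧
      Module.finrank ℝ ↥(vectorSpan ℝ (minFace P a)) = 1 ∧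
      ∀ z : Fin 2 → ℤ,
        (∀ z' : Fin 2 → ℤ, Metric.diam (uline z' u ∩ P) ≤ Metric.diam (uline z u ∩ P)) →
        uline z u ∩ P ⊆ convexHull ℝ (maxFace P a ∪ minFace P a) := by
  have hu' := isCoprime_of_gcd_eq_one hu
  have hu0 := ne_zero_of_isCoprime hu'
  have hS : (toE '' (V : Set (Fin 2 → ℤ))).Finite := V.finite_toSet.image toE
  have hSf : ∀ x ∈ toE '' (V : Set (Fin 2 → ℤ)), ∃ m : ℤ, uheight u x = m := by
    rintro _ ⟨z, -, rfl⟩; exact ⟨_, uheight_toE u z⟩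
  subst hP
  set D := Metric.diam (uline z₁ u ∩ convexHull ℝ (toE '' (V : Set (Fin 2 → ℤ))))
  have hchords := latticeChordsLE_uheight hu' (hS.isCompact_convexHull ℝ).isBounded hm₁
  have hD : 0 < D := hchords.pos hS hSf (by rwa [← affineSpan_convexHull]) (by simp)
  have hchord z (hz : ∀ z', Metric.diam (uline z' u ∩ _) ≤ Metric.diam (uline z u ∩ _)) :=
    exists_mem_add_smul_mem_of_diam_eq hu0 (hS.isCompact_convexHull ℝ) hD
      (le_antisymm (hm₁ z) (hz z₁))
  set w := (D * ‖toE u‖⁻¹) • toE u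
  have hw : ‖w‖ = D := norm_smul_inv_norm' hD.le (toE_ne_zero hu0)
  have hker : LinearMap.ker (uheight u) = ℝ ∙ w := by
    rw [ker_uheight hu0, Submodule.span_singleton_smul_eq (mul_ne_zero hD.ne'
      (inv_ne_zero (norm_ne_zero_iff.2 (toE_ne_zero hu0)))).isUnit]
  obtain ⟨x₁, hx₁, hx₁w, hf₁⟩ := hchord z₁ hm₁
  obtain ⟨x₂, hx₂, hx₂w, hf₂⟩ := hchord z₂ hm₂
  obtain ⟨a, ha, hmax, hmin, hsub⟩ := exists_parallel_edges_of_latticeChordsLE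
    (by rwa [hw]) hker (norm_pos_iff.1 (hw ▸ hD)) hSf hx₁ hx₁w hx₂ hx₂w hf₁ hf₂
    (fun h => hne (by rw [uline_eq hu0, uline_eq hu0, h]))
  refine ⟨a, ha, hmax, hmin, fun z hz y hy => ?_⟩
  obtain ⟨x, hx, hxw, hfx⟩ := hchord z hz
  exact hsub _ x hx hxw hfx ⟨hy.2, uheight_eq_of_mem_uline hy.1⟩
end

section
/- Let S ⊆ ℤ^d be a finite set and let x ∈ S. Then the number of lattice diameter segments of S that have x as an endpoint is at most 2^d − 1; that is, the set {s ∈ S : s ≠ x and |[x, s] ∩ ℤ^d| − 1 = ldiam(S)} has cardinality at most 2^d − 1. -/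
/-- The coordinatewise embedding of `ℤ^d` into `ℝ^d`. -/
def toR {d : ℕ} (z : Fin d → ℤ) : Fin d → ℝ := fun i => (z i : ℝ)

/-- The set of lattice points of `ℝ^d`. -/
def lat (d : ℕ) : Set (Fin d → ℝ) := Set.range (toR (d := d))

/-- The lattice diameter of a set `S ⊆ ℤ^d`. -/
noncomputable def ldiamZ {d : ℕ} (S : Set (Fin d → ℤ)) : ℕ :=
  sSup {n | ∃ x ∈ S, ∃ y ∈ S,
    (segment ℝ (toR x) (toR y) ∩ lat d).ncard - 1 = n}


lemma tmul_int2 (t : ℝ) {a b : ℤ} (ha : ∃ m : ℤ, t * a = m) (hb : ∃ m : ℤ, t * b = m) :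
    ∃ m : ℤ, t * (gcd a b : ℤ) = m := by
  obtain ⟨ma, hma⟩ := ha; obtain ⟨mb, hmb⟩ := hb
  refine ⟨ma * Int.gcdA a b + mb * Int.gcdB a b, ?_⟩
  have h : (gcd a b : ℤ) = a * Int.gcdA a b + b * Int.gcdB a b := by
    rw [← Int.coe_gcd]; exact_mod_cast Int.gcd_eq_gcd_ab a b
  rw [h]
  push_cast
  rw [mul_add, ← mul_assoc, ← mul_assoc, hma, hmb]

lemma tmul_gcd {ι : Type*} [DecidableEq ι] (t : ℝ) (s : Finset ι) (v : ι → ℤ)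
    (h : ∀ i ∈ s, ∃ m : ℤ, t * v i = m) : ∃ m : ℤ, t * (s.gcd v : ℤ) = m := by
  induction s using Finset.induction with
  | empty => exact ⟨0, by simp⟩
  | @insert a s ha ih =>
    rw [Finset.gcd_insert]
    exact tmul_int2 t (h a (Finset.mem_insert_self a s))
      (ih fun i hi => h i (Finset.mem_insert_of_mem hi))

lemma int_gcd_nonneg {ι : Type*} (s : Finset ι) (v : ι → ℤ) : 0 ≤ s.gcd v := by
  have h := Finset.normalize_gcd (s := s) (f := v)
  rw [← Int.abs_eq_normalize] at h
  rw [← h]; exact abs_nonneg _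

lemma seg_ncard {d : ℕ} (x y : Fin d → ℤ) :
    (segment ℝ (toR x) (toR y) ∩ lat d).ncard
      = (Finset.univ.gcd fun i => y i - x i).toNat + 1 := by
  set g : ℤ := Finset.univ.gcd fun i => y i - x i with hgdef
  by_cases hxy : y = x
  · subst hxy
    have h1 : segment ℝ (toR y) (toR y) ∩ lat d = {toR y} := by
      rw [segment_same]
      exact Set.inter_eq_self_of_subset_left (by
        simp [lat, Set.singleton_subset_iff])
    have h2 : g = 0 := by
      rw [hgdef]; rw [Finset.gcd_eq_zero_iff]; intro i _; ring
    rw [h1, h2]; simp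
  · obtain ⟨i0, hi0⟩ := Function.ne_iff.mp hxy
    have hv0 : y i0 - x i0 ≠ 0 := sub_ne_zero.mpr hi0
    have hgne : g ≠ 0 := by
      intro h
      exact hv0 ((Finset.gcd_eq_zero_iff.mp h) i0 (Finset.mem_univ i0))
    have hgpos : 0 < g := lt_of_le_of_ne (int_gcd_nonneg _ _) (Ne.symm hgne)
    have hgR : (0:ℝ) < (g:ℝ) := by exact_mod_cast hgpos
    have hdvd : ∀ i, g ∣ (y i - x i) := fun i =>
      Finset.gcd_dvd (Finset.mem_univ i)
    set w : Fin d → ℤ := fun i => (y i - x i) / g with hwdef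
    have hw : ∀ i, g * w i = y i - x i := fun i => Int.mul_ediv_cancel' (hdvd i)
    have hwR : ∀ i, ((y i - x i : ℤ) : ℝ) = (g:ℝ) * (w i : ℝ) := by
      intro i; exact_mod_cast (hw i).symm
    have hwi0 : w i0 ≠ 0 := by
      intro h; apply hv0; rw [← hw i0, h, mul_zero]
    have hseteq : segment ℝ (toR x) (toR y) ∩ lat d
        = (fun k : ℕ => toR (fun i => x i + (k:ℤ) * w i)) '' Set.Iic g.toNat := by
      ext p
      constructor
      · rintro ⟨hseg, z, hz⟩
        rw [segment_eq_image'] at hseg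
        obtain ⟨t, ⟨ht0, ht1⟩, hp⟩ := hseg
        have hcoord : ∀ i, (z i : ℝ) = (x i : ℝ) + t * ((y i - x i : ℤ) : ℝ) := by
          intro i
          have h3 := congrFun hp i
          rw [← hz] at h3
          simp only [toR, Pi.add_apply, Pi.smul_apply, Pi.sub_apply, smul_eq_mul] at h3
          push_cast
          push_cast at h3
          linarith [h3]
        obtain ⟨m, hm⟩ := tmul_gcd t Finset.univ (fun i => y i - x i) (by
          intro i _
          exact ⟨z i - x i, by
            have hc := hcoord i
            push_cast at hc ⊢
            linarith [hc]⟩)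
        have hm0 : 0 ≤ m := by
          have : (0:ℝ) ≤ (m:ℝ) := by rw [← hm]; positivity
          exact_mod_cast this
        have hmg : m ≤ g := by
          have : (m:ℝ) ≤ (g:ℝ) := by
            rw [← hm]; nlinarith
          exact_mod_cast this
        have ht : t = (m:ℝ) / (g:ℝ) := by
          rw [eq_div_iff hgR.ne']; exact hm
        refine ⟨m.toNat, by simp [Set.mem_Iic]; omega, ?_⟩
        have hz2 : toR (fun i => x i + ((m.toNat : ℤ)) * w i) = p := by
          funext i
          rw [← hz]
          simp only [toR]
          rw [hcoord i, hwR i, ht]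
          have : ((m.toNat : ℤ) : ℝ) = (m : ℝ) := by exact_mod_cast Int.toNat_of_nonneg hm0
          push_cast [this]
          field_simp
        exact hz2
      · rintro ⟨k, hk, rfl⟩
        simp only [Set.mem_Iic] at hk
        constructor
        · rw [segment_eq_image']
          refine ⟨(k:ℝ)/(g:ℝ), ⟨by positivity, ?_⟩, ?_⟩
          · rw [div_le_one hgR]
            have : (k:ℤ) ≤ g := by omega
            exact_mod_cast this
          · funext i
            simp only [toR, Pi.add_apply, Pi.smul_apply, Pi.sub_apply, smul_eq_mul]
            rw [show ((y i : ℝ) - (x i : ℝ)) = ((y i - x i : ℤ) : ℝ) by push_cast; ring,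
              hwR i]
            push_cast
            field_simp
        · exact ⟨_, rfl⟩
    rw [hseteq]
    rw [Set.ncard_image_of_injOn, ← Finset.coe_Iic, Set.ncard_coe_finset, Nat.card_Iic]
    intro k1 _ k2 _ h
    have := congrFun h i0
    simp only [toR, Int.cast_add, Int.cast_mul] at this
    have h2 : x i0 + (k1:ℤ) * w i0 = x i0 + (k2:ℤ) * w i0 := by exact_mod_cast this
    have h3 := mul_right_cancel₀ hwi0 (add_left_cancel h2)
    exact_mod_cast h3

/-- For a finite set `S ⊆ ℤ^d` and `x ∈ S`, at most `2^d - 1`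
lattice diameter segments of `S` have `x` as an endpoint. -/
theorem stmt13 {d : ℕ} (S : Finset (Fin d → ℤ)) (x : Fin d → ℤ) (hx : x ∈ S) :
    {s : Fin d → ℤ | s ∈ S ∧ s ≠ x ∧
      (segment ℝ (toR x) (toR s) ∩ lat d).ncard - 1 =
        ldiamZ (S : Set (Fin d → ℤ))}.ncard ≤ 2 ^ d - 1 := by
  classical
  set G : (Fin d → ℤ) → (Fin d → ℤ) → ℕ :=
    fun a b => (Finset.univ.gcd fun i => b i - a i).toNat with hGdef
  set L := ldiamZ (S : Set (Fin d → ℤ)) with hLdef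
  set T := {s : Fin d → ℤ | s ∈ S ∧ s ≠ x ∧
      (segment ℝ (toR x) (toR s) ∩ lat d).ncard - 1 = L} with hTdef
  -- every point of T has G x s = L
  have hTmem : ∀ s ∈ T, s ∈ S ∧ s ≠ x ∧ G x s = L := by
    intro s hs
    obtain ⟨h1, h2, h3⟩ := hs
    refine ⟨h1, h2, ?_⟩
    rw [seg_ncard] at h3
    simpa using h3
  -- the defining set of ldiamZ
  have hMeq : {n | ∃ a ∈ (S : Set (Fin d → ℤ)), ∃ b ∈ (S : Set (Fin d → ℤ)),
      (segment ℝ (toR a) (toR b) ∩ lat d).ncard - 1 = n}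
      = Set.image2 G (S : Set (Fin d → ℤ)) (S : Set (Fin d → ℤ)) := by
    ext n
    simp only [Set.mem_setOf_eq, Set.mem_image2]
    constructor
    · rintro ⟨a, ha, b, hb, h⟩
      exact ⟨a, ha, b, hb, by rw [seg_ncard] at h; simpa using h⟩
    · rintro ⟨a, ha, b, hb, h⟩
      exact ⟨a, ha, b, hb, by rw [seg_ncard]; simpa using h⟩
  have hbdd : ∀ a ∈ S, ∀ b ∈ S, G a b ≤ L := by
    intro a ha b hb
    rw [hLdef]
    unfold ldiamZ
    rw [hMeq]
    exact le_csSup ((S.finite_toSet.image2 G S.finite_toSet).bddAbove)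
      (Set.mem_image2_of_mem ha hb)
  rcases Set.eq_empty_or_nonempty T with hT | ⟨s0, hs0⟩
  · rw [hT]; simp
  · -- L is positive
    obtain ⟨hs0S, hs0x, hs0G⟩ := hTmem s0 hs0
    have hLpos : 0 < L := by
      rw [← hs0G]
      rcases Nat.eq_zero_or_pos (G x s0) with h | h
      · exfalso
        apply hs0x
        have h' : (Finset.univ.gcd fun i => s0 i - x i).toNat = 0 := h
        have hg0 : (Finset.univ.gcd fun i => s0 i - x i) = 0 := by
          have := int_gcd_nonneg Finset.univ (fun i => s0 i - x i)
          omega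
        funext i
        have := Finset.gcd_eq_zero_iff.mp hg0 i (Finset.mem_univ i)
        omega
      · exact h
    have hLZpos : (0:ℤ) < (L:ℤ) := by exact_mod_cast hLpos
    -- parity map
    set F : (Fin d → ℤ) → (Fin d → ZMod 2) :=
      fun s => fun i => (((s i - x i) / (L:ℤ) : ℤ) : ZMod 2) with hFdef
    -- facts about members of T
    have hfacts : ∀ s ∈ T, (∀ i, (L:ℤ) * ((s i - x i) / (L:ℤ)) = s i - x i) := by
      intro s hs i
      obtain ⟨_, _, hG⟩ := hTmem s hs
      apply Int.mul_ediv_cancel'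
      have hdvd : (Finset.univ.gcd fun j => s j - x j) ∣ (s i - x i) :=
        Finset.gcd_dvd (Finset.mem_univ i)
      have hG' : (Finset.univ.gcd fun j => s j - x j).toNat = L := hG
      have : (Finset.univ.gcd fun j => s j - x j) = (L:ℤ) := by
        have h1 := int_gcd_nonneg Finset.univ (fun j => s j - x j)
        omega
      rwa [this] at hdvd
    -- F s ≠ 0 for s in T
    have hFne : ∀ s ∈ T, F s ≠ 0 := by
      intro s hs h0
      obtain ⟨hsS, hsx, hG⟩ := hTmem s hs
      have hdvd2 : ∀ i, (2 * L : ℤ) ∣ (s i - x i) := by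
        intro i
        have h2 : ((((s i - x i) / (L:ℤ) : ℤ) : ZMod 2)) = 0 := congrFun h0 i
        rw [ZMod.intCast_zmod_eq_zero_iff_dvd] at h2
        obtain ⟨c, hc⟩ := h2
        refine ⟨c, ?_⟩
        have := hfacts s hs i
        push_cast at hc
        rw [← this, hc]; ring
      have hdvdgcd : (2 * L : ℤ) ∣ (Finset.univ.gcd fun j => s j - x j) :=
        Finset.dvd_gcd fun i _ => hdvd2 i
      have hG' : (Finset.univ.gcd fun j => s j - x j).toNat = L := hG
      have hgL : (Finset.univ.gcd fun j => s j - x j) = (L:ℤ) := by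
        have h1 := int_gcd_nonneg Finset.univ (fun j => s j - x j)
        omega
      rw [hgL] at hdvdgcd
      have := Int.le_of_dvd hLZpos hdvdgcd
      omega
    -- F injective on T
    have hFinj : Set.InjOn F T := by
      intro s1 hs1 s2 hs2 hF
      by_contra hne
      obtain ⟨i1, hi1⟩ := Function.ne_iff.mp hne
      -- each coordinate of s2 - s1 divisible by 2L
      have hdvd2 : ∀ i, (2 * L : ℤ) ∣ (s2 i - s1 i) := by
        intro i
        have h2 : ((((s1 i - x i) / (L:ℤ) : ℤ) : ZMod 2))
            = (((s2 i - x i) / (L:ℤ) : ℤ) : ZMod 2) := congrFun hF i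
        rw [ZMod.intCast_eq_intCast_iff] at h2
        obtain ⟨c, hc⟩ := Int.ModEq.dvd h2
        refine ⟨c, ?_⟩
        have e1 := hfacts s1 hs1 i
        have e2 := hfacts s2 hs2 i
        have : s2 i - s1 i = (L:ℤ) * ((s2 i - x i) / (L:ℤ) - (s1 i - x i) / (L:ℤ)) := by
          rw [mul_sub, e1, e2]; ring
        rw [this, hc]; ring
      have hdvdgcd : (2 * L : ℤ) ∣ (Finset.univ.gcd fun j => s2 j - s1 j) :=
        Finset.dvd_gcd fun i _ => hdvd2 i
      have hgne : (Finset.univ.gcd fun j => s2 j - s1 j) ≠ 0 := by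
        intro h
        have := Finset.gcd_eq_zero_iff.mp h i1 (Finset.mem_univ i1)
        omega
      have hgpos : (0:ℤ) < (Finset.univ.gcd fun j => s2 j - s1 j) :=
        lt_of_le_of_ne (int_gcd_nonneg _ _) (Ne.symm hgne)
      have hge := Int.le_of_dvd hgpos hdvdgcd
      have hle : G s1 s2 ≤ L := hbdd s1 (hTmem s1 hs1).1 s2 (hTmem s2 hs2).1
      have hle' : (Finset.univ.gcd fun i => s2 i - s1 i).toNat ≤ L := hle
      omega
    -- conclude
    have himsub : F '' T ⊆ {v : Fin d → ZMod 2 | v ≠ 0} := by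
      rintro v ⟨s, hs, rfl⟩
      exact hFne s hs
    have hcompl : {v : Fin d → ZMod 2 | v ≠ 0} = ({0} : Set (Fin d → ZMod 2))ᶜ := by
      ext v; simp
    have hcard : ({v : Fin d → ZMod 2 | v ≠ 0}).ncard = 2 ^ d - 1 := by
      rw [hcompl]
      have h1 := Set.ncard_add_ncard_compl ({0} : Set (Fin d → ZMod 2))
      rw [Set.ncard_singleton] at h1
      have h2 : Nat.card (Fin d → ZMod 2) = 2 ^ d := by
        rw [Nat.card_eq_fintype_card, Fintype.card_fun]
        simp
      omega
    calc T.ncard = (F '' T).ncard := (Set.ncard_image_of_injOn hFinj).symm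
      _ ≤ ({v : Fin d → ZMod 2 | v ≠ 0}).ncard :=
          Set.ncard_le_ncard himsub (Set.toFinite _)
      _ = 2 ^ d - 1 := hcard
end

section
/- Let S ⊆ ℤ^d be a finite set. Then there exists a coloring f : S → {0, 1, …, 2^d − 1} with 2^d colors such that for all x, y ∈ S with x ≠ y and |[x, y] ∩ ℤ^d| − 1 = ldiam(S), we have f(x) ≠ f(y). Consequently, if ldiam(S) ≥ 1, then S can be partitioned into at most 2^d subsets each having lattice diameter strictly smaller than ldiam(S); i.e., the lattice Borsuk number satisfies β_ℤ(S) ≤ 2^d. -/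
lemma bezout {ι : Type*} (s : Finset ι) (f : ι → ℤ) :
    ∃ c : ι → ℤ, ((s.gcd fun i => (f i).natAbs : ℕ) : ℤ) = ∑ i ∈ s, c i * f i := by
  classical
  induction s using Finset.induction_on with
  | empty => exact ⟨0, by simp⟩
  | @insert a s ha ih =>
    obtain ⟨c, hc⟩ := ih
    set N : ℕ := s.gcd fun i => (f i).natAbs with hN
    refine ⟨Function.update (fun i => (f a).gcdB ↑N * c i) a ((f a).gcdA ↑N), ?_⟩
    rw [Finset.sum_insert ha, Function.update_self]
    have h1 : ((insert a s).gcd fun i => (f i).natAbs) = Nat.gcd (f a).natAbs N := by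
      rw [Finset.gcd_insert]; rfl
    have h2 : (Nat.gcd (f a).natAbs N : ℤ) = Int.gcd (f a) (N : ℤ) := by
      simp [Int.gcd]
    have h3 := Int.gcd_eq_gcd_ab (f a) (N : ℤ)
    have h4 : ∑ i ∈ s, Function.update (fun i => (f a).gcdB ↑N * c i) a ((f a).gcdA ↑N) i * f i
        = (f a).gcdB ↑N * ∑ i ∈ s, c i * f i := by
      rw [Finset.mul_sum]
      refine Finset.sum_congr rfl fun i hi => ?_
      rw [Function.update_of_ne (by rintro rfl; exact ha hi)]
      ring
    rw [h4, ← hc, h1, h2, h3]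
    ring

def gcdN {d : ℕ} (x y : Fin d → ℤ) : ℕ := Finset.univ.gcd fun i => (y i - x i).natAbs

lemma toR_injective {d : ℕ} : Function.Injective (toR (d := d)) := by
  intro a b h
  funext i
  have h2 := congrFun h i
  simp only [toR] at h2
  exact_mod_cast h2

lemma key {d : ℕ} (x y : Fin d → ℤ) :
    (segment ℝ (toR x) (toR y) ∩ lat d).ncard = gcdN x y + 1 := by
  by_cases hxy : x = y
  · subst hxy
    have h1 : segment ℝ (toR x) (toR x) ∩ lat d = {toR x} := by
      rw [segment_same]
      exact Set.inter_eq_self_of_subset_left (by rintro z rfl; exact ⟨x, rfl⟩)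
    rw [h1, Set.ncard_singleton]
    have : gcdN x x = 0 := Finset.gcd_eq_zero_iff.mpr (by simp)
    omega
  · set G := gcdN x y with hGdef
    have hGpos : 0 < G := by
      rcases Nat.eq_zero_or_pos G with h | h
      · exfalso
        apply hxy
        funext i
        have := Finset.gcd_eq_zero_iff.mp h i (Finset.mem_univ i)
        omega
      · exact h
    have hdvd : ∀ i, (G : ℤ) ∣ y i - x i := fun i =>
      Int.natCast_dvd.mpr (Finset.gcd_dvd (Finset.mem_univ i))
    set v : Fin d → ℤ := fun i => (y i - x i) / (G : ℤ) with hvdef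
    have hv : ∀ i, y i - x i = (G : ℤ) * v i := fun i =>
      (Int.mul_ediv_cancel' (hdvd i)).symm
    have hyv : ∀ i, (y i : ℝ) - (x i : ℝ) = (G : ℝ) * (v i : ℝ) := by
      intro i
      exact_mod_cast congrArg (fun z : ℤ => (z : ℝ)) (hv i)
    obtain ⟨i₀, hi₀⟩ : ∃ i, v i ≠ 0 := by
      by_contra h
      push_neg at h
      apply hxy
      funext i
      have := hv i
      rw [h i, mul_zero] at this
      omega
    have hGR : (0:ℝ) < (G:ℝ) := by exact_mod_cast hGpos
    have hset : segment ℝ (toR x) (toR y) ∩ lat d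
        = (fun k : ℤ => toR (x + k • v)) '' Set.Icc (0:ℤ) (G:ℤ) := by
      ext z
      constructor
      · rintro ⟨hseg, w, rfl⟩
        rw [segment_eq_image'] at hseg
        obtain ⟨t, ⟨ht0, ht1⟩, hz⟩ := hseg
        have hw : ∀ i, (w i : ℝ) - (x i : ℝ) = t * ((y i : ℝ) - (x i : ℝ)) := by
          intro i
          have h := congrFun hz i
          simp only [toR, Pi.add_apply, Pi.smul_apply, Pi.sub_apply, smul_eq_mul] at h
          linarith [h]
        obtain ⟨c, hc⟩ := bezout Finset.univ (fun i => y i - x i)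
        set k : ℤ := ∑ i, c i * (w i - x i) with hkdef
        have hGr : (G : ℝ) = ∑ i, (c i : ℝ) * ((y i : ℝ) - (x i : ℝ)) := by
          have := congrArg (fun z : ℤ => (z : ℝ)) hc
          push_cast at this
          exact this
        have hkr : (k : ℝ) = t * (G : ℝ) := by
          have h1 : (k : ℝ) = ∑ i, (c i : ℝ) * ((w i : ℝ) - (x i : ℝ)) := by
            rw [hkdef]; push_cast
            exact Finset.sum_congr rfl fun i _ => by ring
          rw [h1, hGr, Finset.mul_sum]
          refine Finset.sum_congr rfl fun i _ => ?_
          rw [hw i]; ring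
        have hk0 : (0:ℤ) ≤ k := by
          have : (0:ℝ) ≤ (k:ℝ) := by rw [hkr]; positivity
          exact_mod_cast this
        have hk1 : k ≤ (G:ℤ) := by
          have : (k:ℝ) ≤ (G:ℝ) := by rw [hkr]; nlinarith
          exact_mod_cast this
        refine ⟨k, ⟨hk0, hk1⟩, ?_⟩
        have hwk : w = x + k • v := by
          funext i
          have h1 : (w i : ℝ) = (x i : ℝ) + (k:ℝ) * (v i : ℝ) := by
            have := hw i
            rw [hyv i] at this
            rw [hkr] at *
            nlinarith [this]
          have : w i = x i + k * v i := by exact_mod_cast h1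
          simpa using this
        show toR (x + k • v) = toR w
        exact congrArg toR hwk.symm
      · rintro ⟨k, ⟨hk0, hk1⟩, rfl⟩
        refine ⟨?_, ⟨x + k • v, rfl⟩⟩
        rw [segment_eq_image']
        refine ⟨(k:ℝ)/(G:ℝ), ⟨by positivity, ?_⟩, ?_⟩
        · rw [div_le_one hGR]
          exact_mod_cast hk1
        · funext i
          simp only [toR, Pi.add_apply, Pi.smul_apply, Pi.sub_apply, smul_eq_mul]
          rw [hyv i]
          have hkr' : (0:ℝ) ≤ (k:ℝ) := by exact_mod_cast hk0
          push_cast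
          field_simp
    rw [hset]
    have hinj : Set.InjOn (fun k : ℤ => toR (x + k • v)) (Set.Icc (0:ℤ) (G:ℤ)) := by
      intro k _ k' _ h
      have h2 : x + k • v = x + k' • v := toR_injective h
      have h3 : k * v i₀ = k' * v i₀ := by
        have := congrFun h2 i₀
        simpa using this
      exact mul_right_cancel₀ hi₀ h3
    rw [Set.ncard_image_of_injOn hinj, ← Finset.coe_Icc, Set.ncard_coe_finset, Int.card_Icc]
    simp

lemma hval {d : ℕ} (x y : Fin d → ℤ) :
    (segment ℝ (toR x) (toR y) ∩ lat d).ncard - 1 = gcdN x y := by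
  rw [key]
  omega

lemma hld {d : ℕ} (S' : Set (Fin d → ℤ)) :
    ldiamZ S' = sSup {m | ∃ x ∈ S', ∃ y ∈ S', gcdN x y = m} := by
  unfold ldiamZ
  congr 1
  ext m
  simp only [Set.mem_setOf_eq, hval]

lemma gcdN_self {d : ℕ} (x : Fin d → ℤ) : gcdN x x = 0 :=
  Finset.gcd_eq_zero_iff.mpr (by simp [gcdN])

lemma gcdN_pos {d : ℕ} {x y : Fin d → ℤ} (h : x ≠ y) : 0 < gcdN x y := by
  rcases Nat.eq_zero_or_pos (gcdN x y) with h0 | h0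
  · exfalso
    apply h
    funext i
    have := Finset.gcd_eq_zero_iff.mp h0 i (Finset.mem_univ i)
    omega
  · exact h0

/-- Any finite `S ⊆ ℤ^d` admits a coloring with `2^d` colors in
which the two endpoints of each lattice diameter segment get distinct colors;
consequently, if `ldiamZ S ≥ 1`, then `S` can be partitioned into at most `2^d`
parts each of strictly smaller lattice diameter (`β_ℤ(S) ≤ 2^d`). -/
theorem stmt15 {d : ℕ} (S : Finset (Fin d → ℤ)) :
    (∃ f : (Fin d → ℤ) → Fin (2 ^ d), ∀ x ∈ S, ∀ y ∈ S, x ≠ y →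
      (segment ℝ (toR x) (toR y) ∩ lat d).ncard - 1 = ldiamZ (S : Set (Fin d → ℤ)) →
      f x ≠ f y) ∧
    (1 ≤ ldiamZ (S : Set (Fin d → ℤ)) →
      ∃ parts : Fin (2 ^ d) → Set (Fin d → ℤ),
        (∀ i j, i ≠ j → Disjoint (parts i) (parts j)) ∧
        (⋃ i, parts i) = (S : Set (Fin d → ℤ)) ∧
        ∀ i, ldiamZ (parts i) < ldiamZ (S : Set (Fin d → ℤ))) := by
  classical
  set n : ℕ := ldiamZ (S : Set (Fin d → ℤ)) with hn
  -- maximality of n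
  have hfin : {m | ∃ x ∈ (S : Set (Fin d → ℤ)), ∃ y ∈ (S : Set (Fin d → ℤ)),
      gcdN x y = m}.Finite := by
    refine Set.Finite.subset (Set.Finite.image (fun p : (Fin d → ℤ) × (Fin d → ℤ) =>
      gcdN p.1 p.2) (S.finite_toSet.prod S.finite_toSet)) ?_
    rintro m ⟨x, hx, y, hy, rfl⟩
    exact ⟨(x, y), ⟨hx, hy⟩, rfl⟩
  have hmax : ∀ x ∈ S, ∀ y ∈ S, gcdN x y ≤ n := by
    intro x hx y hy
    rw [hn, hld]
    exact le_csSup hfin.bddAbove ⟨x, hx, y, hy, rfl⟩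
  -- the coloring
  let e : (Fin d → ZMod 2) ≃ Fin (2 ^ d) := Fintype.equivFinOfCardEq (by simp)
  let f : (Fin d → ℤ) → Fin (2 ^ d) := fun z => e fun i => ((z i / (n : ℤ) : ℤ) : ZMod 2)
  have hcol : ∀ x ∈ S, ∀ y ∈ S, x ≠ y →
      (segment ℝ (toR x) (toR y) ∩ lat d).ncard - 1 = n → f x ≠ f y := by
    intro x hx y hy hne hdiam
    rw [hval] at hdiam
    have hnpos : 0 < n := hdiam ▸ gcdN_pos hne
    have hdvd : ∀ i, (n : ℤ) ∣ y i - x i := fun i =>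
      Int.natCast_dvd.mpr (hdiam ▸ Finset.gcd_dvd (Finset.mem_univ i))
    set v : Fin d → ℤ := fun i => (y i - x i) / (n : ℤ) with hvdef
    have hv : ∀ i, y i - x i = (n : ℤ) * v i := fun i =>
      (Int.mul_ediv_cancel' (hdvd i)).symm
    have hodd : ∃ i, ¬ ((2:ℤ) ∣ v i) := by
      by_contra h
      push_neg at h
      have h2 : (2 * n : ℕ) ∣ gcdN x y := by
        refine Finset.dvd_gcd fun i _ => ?_
        refine Int.natCast_dvd.mp ?_
        obtain ⟨m, hm⟩ := h i
        refine ⟨m, ?_⟩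
        rw [hv i, hm]
        push_cast
        ring
      rw [hdiam] at h2
      have := Nat.le_of_dvd hnpos h2
      omega
    obtain ⟨i, hvodd⟩ := hodd
    intro hfeq
    apply hvodd
    have heq : ∀ j, ((x j / (n : ℤ) : ℤ) : ZMod 2) = ((y j / (n : ℤ) : ℤ) : ZMod 2) :=
      fun j => congrFun (e.injective hfeq) j
    have hq : y i / (n : ℤ) = x i / (n : ℤ) + v i := by
      have hy' : y i = x i + v i * (n : ℤ) := by
        have := hv i
        linarith [this]
      rw [hy', Int.add_mul_ediv_right _ _ (by exact_mod_cast hnpos.ne' : (n:ℤ) ≠ 0)]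
    have h3 := heq i
    rw [hq] at h3
    push_cast at h3
    have h4 : ((v i : ℤ) : ZMod 2) = 0 := by
      have := left_eq_add.mp h3
      exact this
    exact (ZMod.intCast_zmod_eq_zero_iff_dvd (v i) 2).mp h4
  refine ⟨⟨f, hcol⟩, fun h1 => ?_⟩
  -- the partition
  refine ⟨fun i => {z | z ∈ (S : Set (Fin d → ℤ)) ∧ f z = i}, ?_, ?_, ?_⟩
  · intro i j hij
    rw [Set.disjoint_left]
    rintro z ⟨_, hzi⟩ ⟨_, hzj⟩
    exact hij (hzi ▸ hzj ▸ rfl)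
  · ext z
    simp only [Set.mem_iUnion, Set.mem_setOf_eq]
    exact ⟨fun ⟨i, hz, _⟩ => hz, fun hz => ⟨f z, hz, rfl⟩⟩
  · intro i
    rw [hld]
    set T := {m | ∃ x ∈ {z | z ∈ (S : Set (Fin d → ℤ)) ∧ f z = i},
      ∃ y ∈ {z | z ∈ (S : Set (Fin d → ℤ)) ∧ f z = i}, gcdN x y = m} with hT
    have hTlt : ∀ m ∈ T, m < n := by
      rintro m ⟨x, ⟨hxS, hxf⟩, y, ⟨hyS, hyf⟩, rfl⟩
      rcases lt_or_eq_of_le (hmax x hxS y hyS) with h | h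
      · exact h
      · exfalso
        have hne : x ≠ y := by
          rintro rfl
          rw [gcdN_self] at h
          omega
        exact hcol x hxS y hyS hne (by rw [hval]; exact h) (hxf.trans hyf.symm)
    rcases Set.eq_empty_or_nonempty T with hTe | hTne
    · rw [hTe, csSup_empty]
      exact h1
    · have hbdd : BddAbove T := ⟨n, fun m hm => le_of_lt (hTlt m hm)⟩
      have := csSup_le hTne fun m hm => Nat.le_sub_one_of_lt (hTlt m hm)
      omega
end

section
/- Let S = {0, 1}^d ⊆ ℤ^d and let n be a natural number. If f : S → {0, 1, …, n − 1} is a coloring such that for all x, y ∈ S with x ≠ y and |[x, y] ∩ ℤ^d| − 1 = ldiam(S) we have f(x) ≠ f(y), then n ≥ 2^d. In particular, the lattice Borsuk number of {0, 1}^d equals 2^d, so the bound β_ℤ(S) ≤ 2^d for finite S ⊆ ℤ^d is best possible. -/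
lemma toR_ne {d : ℕ} {x y : Fin d → ℤ} (h : x ≠ y) : toR x ≠ toR y := by
  intro he
  apply h
  funext i
  have h := congrFun he i
  simp only [toR] at h
  exact_mod_cast h

lemma seg_eq {d : ℕ} {x y : Fin d → ℤ} (hx : ∀ i, x i = 0 ∨ x i = 1)
    (hy : ∀ i, y i = 0 ∨ y i = 1) (hxy : x ≠ y) :
    segment ℝ (toR x) (toR y) ∩ lat d = {toR x, toR y} := by
  ext p
  constructor
  · rintro ⟨⟨a, b, ha, hb, hab, rfl⟩, w, hw⟩
    obtain ⟨i, hi⟩ : ∃ i, x i ≠ y i := by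
      by_contra h; push_neg at h; exact hxy (funext h)
    have hcoord : (w i : ℝ) = a * (x i : ℝ) + b * (y i : ℝ) := by
      have h := congrFun hw i
      simp only [toR, Pi.add_apply, Pi.smul_apply, smul_eq_mul] at h
      exact h
    have hb1 : b ≤ 1 := by linarith
    have ha1 : a ≤ 1 := by linarith
    have hkey : b = 0 ∨ b = 1 := by
      rcases hx i with h0 | h1 <;> rcases hy i with h0' | h1'
      · exact absurd (h0.trans h0'.symm) hi
      · -- x i = 0, y i = 1 : w i = b
        have hbw : b = (w i : ℝ) := by rw [hcoord, h0, h1']; push_cast; ring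
        have h0w : (0:ℝ) ≤ (w i : ℝ) := hbw ▸ hb
        have h1w : ((w i : ℝ)) ≤ 1 := hbw ▸ hb1
        have : (0:ℤ) ≤ w i := by exact_mod_cast h0w
        have : w i ≤ 1 := by exact_mod_cast h1w
        have : w i = 0 ∨ w i = 1 := by omega
        rcases this with h | h <;> [left; right] <;> rw [hbw, h] <;> norm_num
      · -- x i = 1, y i = 0 : w i = a
        have haw : a = (w i : ℝ) := by rw [hcoord, h1, h0']; push_cast; ring
        have h0w : (0:ℝ) ≤ (w i : ℝ) := haw ▸ ha
        have h1w : ((w i : ℝ)) ≤ 1 := haw ▸ ha1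
        have : (0:ℤ) ≤ w i := by exact_mod_cast h0w
        have : w i ≤ 1 := by exact_mod_cast h1w
        have : w i = 0 ∨ w i = 1 := by omega
        rcases this with h | h
        · right; have : a = 0 := by rw [haw, h]; norm_num
          linarith
        · left; have : a = 1 := by rw [haw, h]; norm_num
          linarith
      · exact absurd (h1.trans h1'.symm) hi
    rcases hkey with h | h
    · left
      have : a = 1 := by linarith
      simp [this, h]
    · right
      have : a = 0 := by linarith
      simp [this, h]
  · rintro (rfl | rfl)
    · exact ⟨left_mem_segment ℝ _ _, ⟨x, rfl⟩⟩
    · exact ⟨right_mem_segment ℝ _ _, ⟨y, rfl⟩⟩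

lemma seg_card {d : ℕ} {x y : Fin d → ℤ} (hx : ∀ i, x i = 0 ∨ x i = 1)
    (hy : ∀ i, y i = 0 ∨ y i = 1) (hxy : x ≠ y) :
    (segment ℝ (toR x) (toR y) ∩ lat d).ncard = 2 := by
  rw [seg_eq hx hy hxy]
  exact Set.ncard_pair (toR_ne hxy)

lemma ldiam_cube {d : ℕ} (x0 y0 : Fin d → ℤ) (hx0 : ∀ i, x0 i = 0 ∨ x0 i = 1)
    (hy0 : ∀ i, y0 i = 0 ∨ y0 i = 1) (hne : x0 ≠ y0) :
    ldiamZ {z : Fin d → ℤ | ∀ i, z i = 0 ∨ z i = 1} = 1 := by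
  unfold ldiamZ
  have h1 : (1:ℕ) ∈ {n | ∃ x ∈ {z : Fin d → ℤ | ∀ i, z i = 0 ∨ z i = 1},
      ∃ y ∈ {z : Fin d → ℤ | ∀ i, z i = 0 ∨ z i = 1},
      (segment ℝ (toR x) (toR y) ∩ lat d).ncard - 1 = n} :=
    ⟨x0, hx0, y0, hy0, by rw [seg_card hx0 hy0 hne]⟩
  have hub : ∀ m ∈ {n | ∃ x ∈ {z : Fin d → ℤ | ∀ i, z i = 0 ∨ z i = 1},
      ∃ y ∈ {z : Fin d → ℤ | ∀ i, z i = 0 ∨ z i = 1},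
      (segment ℝ (toR x) (toR y) ∩ lat d).ncard - 1 = m}, m ≤ 1 := by
    rintro m ⟨x, hx, y, hy, hm⟩
    by_cases hxy : x = y
    · subst hxy
      rw [segment_same] at hm
      have : ({toR x} : Set (Fin d → ℝ)) ∩ lat d = {toR x} :=
        Set.inter_eq_self_of_subset_left (Set.singleton_subset_iff.mpr ⟨x, rfl⟩)
      rw [this, Set.ncard_singleton] at hm
      omega
    · rw [seg_card hx hy hxy] at hm
      omega
  exact le_antisymm (csSup_le ⟨1, h1⟩ hub) (le_csSup ⟨1, hub⟩ h1)

/-- Any coloring of `S = {0,1}^d` with `n` colors in which the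
endpoints of every lattice diameter segment receive distinct colors requires
`n ≥ 2^d`; hence the lattice Borsuk number of `{0,1}^d` is `2^d` and the bound
`β_ℤ(S) ≤ 2^d` is best possible. -/
theorem stmt16 {d : ℕ} (S : Set (Fin d → ℤ)) (hS : S = {z | ∀ i, z i = 0 ∨ z i = 1})
    (n : ℕ) (f : (Fin d → ℤ) → Fin n)
    (hf : ∀ x ∈ S, ∀ y ∈ S, x ≠ y →
      (segment ℝ (toR x) (toR y) ∩ lat d).ncard - 1 = ldiamZ S → f x ≠ f y) :
    2 ^ d ≤ n := by
  subst hS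
  set g : (Fin d → Bool) → (Fin d → ℤ) := fun b i => if b i then 1 else 0 with hg
  have hgS : ∀ b, g b ∈ {z : Fin d → ℤ | ∀ i, z i = 0 ∨ z i = 1} := by
    intro b i
    by_cases h : b i <;> simp [hg, h]
  have hginj : Function.Injective g := by
    intro a b hab
    funext i
    have h := congrFun hab i
    by_cases h1 : a i <;> by_cases h2 : b i <;> simp [hg, h1, h2] at h ⊢
  have hinj : Function.Injective (f ∘ g) := by
    intro a b hab
    by_contra hne
    have hgne : g a ≠ g b := fun h => hne (hginj h)
    exact hf (g a) (hgS a) (g b) (hgS b) hgne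
      (by rw [seg_card (hgS a) (hgS b) hgne,
          ldiam_cube (g a) (g b) (hgS a) (hgS b) hgne]) hab
  calc 2 ^ d = Fintype.card (Fin d → Bool) := by simp
    _ ≤ Fintype.card (Fin n) := Fintype.card_le_of_injective _ hinj
    _ = n := Fintype.card_fin n
end
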